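/- Let n ≥ 3. The space of linear maps φ from the symmetric matrices {S ∈ Matₙ(ℂ) : Sᵀ = S} to the traceless matrices sl(n,ℂ) = {A ∈ Matₙ(ℂ) : tr A = 0} satisfying φ(X)Y + Y·φ(X)ᵀ = −(φ(Y)X + X·φ(Y)ᵀ) for all symmetric X, Y has complex dimension n(n−1)/2. (That is, the first skew-prolongation of sl(n,ℂ) acting on ⊙²ℂⁿ is isomorphic to Λ²(ℂⁿ)*.) -/

import Mathlib

open Matrix

/-- The space `⊙²ℂⁿ` of symmetric `n × n` complex matrices. -/
noncomputable def symMat (n : ℕ) : Submodule ℂ (Matrix (Fin n) (Fin n) ℂ) where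
  carrier := {S | Sᵀ = S}
  add_mem' := by
    intro a b ha hb
    simp only [Set.mem_setOf_eq] at *
    rw [Matrix.transpose_add, ha, hb]
  zero_mem' := by
    simp only [Set.mem_setOf_eq, Matrix.transpose_zero]
  smul_mem' := by
    intro c a ha
    simp only [Set.mem_setOf_eq] at *
    rw [Matrix.transpose_smul, ha]

/-- The first skew-prolongation of `sl(n,ℂ)` acting on `⊙²ℂⁿ` (symmetric matrices,
`A·S = AS + SAᵀ`): linear maps `φ` from symmetric matrices to traceless matrices with
`φ(X)·Y = −φ(Y)·X`. -/
noncomputable def slSymProlong (n : ℕ) :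
    Submodule ℂ (symMat n →ₗ[ℂ] Matrix (Fin n) (Fin n) ℂ) where
  carrier := {φ | (∀ X : symMat n, (φ X).trace = 0) ∧
    ∀ X Y : symMat n,
      φ X * (Y : Matrix (Fin n) (Fin n) ℂ) + (Y : Matrix (Fin n) (Fin n) ℂ) * (φ X)ᵀ
        = -(φ Y * (X : Matrix (Fin n) (Fin n) ℂ) + (X : Matrix (Fin n) (Fin n) ℂ) * (φ Y)ᵀ)}
  add_mem' := by
    rintro a b ⟨ha1, ha2⟩ ⟨hb1, hb2⟩
    refine ⟨fun X => ?_, fun X Y => ?_⟩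
    · simp [ha1 X, hb1 X]
    · have h1 := ha2 X Y
      have h2 := hb2 X Y
      simp only [LinearMap.add_apply, Matrix.transpose_add, Matrix.add_mul, Matrix.mul_add]
      linear_combination (norm := abel) h1 + h2
  zero_mem' := by
    refine ⟨fun X => ?_, fun X Y => ?_⟩ <;> simp
  smul_mem' := by
    rintro c a ⟨ha1, ha2⟩
    refine ⟨fun X => ?_, fun X Y => ?_⟩
    · simp [ha1 X]
    · have h1 := ha2 X Y
      simp only [LinearMap.smul_apply, Matrix.transpose_smul, Matrix.smul_mul, Matrix.mul_smul]
      rw [← smul_add, h1, smul_neg, smul_add]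

/-!
Right multiplication `X ↦ X * W` by a skew-symmetric `W` lies in the prolongation, and every
`φ` is of this form with `W = φ 1`: taking `X = Y = 1` shows that `φ 1` is skew, and
`ψ = φ - (X ↦ X * φ 1)` vanishes at `1`. Taking `Y = 1` shows that the values of `ψ` are skew,
after which the prolongation identity reads `[ψ X, Y] = -[ψ Y, X]`. For
`Λ = diag(0, 1, …, n - 1)` this says first that `ψ Λ`, and then that every `ψ X`, commutes
with `Λ`; a skew matrix commuting with a diagonal matrix with distinct entries is zero.
So the prolongation is `so(n)`, of dimension `n.choose 2`.
-/

namespace Matrix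

instance {m n α : Type*} [AddGroup α] [IsAddTorsionFree α] : IsAddTorsionFree (Matrix m n α) :=
  inferInstanceAs (IsAddTorsionFree (m → n → α))

theorem apply_self_eq_zero_of_transpose_eq_neg {ι α : Type*} [AddGroup α] [IsAddTorsionFree α]
    {A : Matrix ι ι α} (hA : Aᵀ = -A) (i : ι) : A i i = 0 :=
  self_eq_neg.mp (congrFun (congrFun hA i) i)

variable {ι R : Type*} [Fintype ι] [DecidableEq ι] [CommRing R]

theorem mem_skewAdjointMatricesSubmodule_one {A : Matrix ι ι R} :
    A ∈ skewAdjointMatricesSubmodule 1 ↔ Aᵀ = -A := by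
  simp [Matrix.IsSkewAdjoint, Matrix.IsAdjointPair]

variable [IsAddTorsionFree R]

theorem eq_zero_of_transpose_eq_neg_of_commute_diagonal [NoZeroDivisors R] {A : Matrix ι ι R}
    {d : ι → R} (hA : Aᵀ = -A) (hd : Function.Injective d) (hAd : Commute A (diagonal d)) :
    A = 0 := by
  ext i j
  rcases eq_or_ne i j with rfl | hij
  · exact apply_self_eq_zero_of_transpose_eq_neg hA i
  · have h : A i j * d j = d i * A i j := by
      simpa [mul_diagonal, diagonal_mul] using congrFun (congrFun hAd.eq i) j
    have h' : (d j - d i) * A i j = 0 := by linear_combination h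
    exact (mul_eq_zero.mp h').resolve_left (sub_ne_zero.mpr (hd.ne hij.symm))

variable [LinearOrder ι]

def skewAdjointMatricesSubmoduleOneEquivUpper :
    skewAdjointMatricesSubmodule (1 : Matrix ι ι R) ≃ₗ[R] ({p : ι × ι // p.1 < p.2} → R) where
  toFun A p := (A : Matrix ι ι R) p.1.1 p.1.2
  map_add' _ _ := rfl
  map_smul' _ _ := rfl
  invFun f := ⟨of fun i j =>
      if h : i < j then f ⟨(i, j), h⟩ else if h : j < i then -f ⟨(j, i), h⟩ else 0, by
    rw [mem_skewAdjointMatricesSubmodule_one]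
    ext i j
    rcases lt_trichotomy i j with h | rfl | h
    · simp [h, h.not_gt]
    · simp
    · simp [h, h.not_gt]⟩
  left_inv A := by
    have hA := mem_skewAdjointMatricesSubmodule_one.mp A.2
    ext i j
    rcases lt_trichotomy i j with h | rfl | h
    · simp [h]
    · simp [apply_self_eq_zero_of_transpose_eq_neg hA]
    · simpa [h, h.not_gt] using (congrFun (congrFun hA j) i).symm
  right_inv f := by
    funext p
    simp [p.2]

theorem finrank_skewAdjointMatricesSubmodule_one [Nontrivial R] :
    Module.finrank R (skewAdjointMatricesSubmodule (1 : Matrix ι ι R)) =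
      (Fintype.card ι).choose 2 := by
  rw [skewAdjointMatricesSubmoduleOneEquivUpper.finrank_eq, Module.finrank_fintype_fun_eq_card,
    Fintype.card_subtype, Fintype.card_product_filter_lt]

end Matrix

noncomputable section

namespace slSymProlong

variable {n : ℕ}

def symOne (n : ℕ) : symMat n := ⟨1, transpose_one⟩

def symDiagonal (d : Fin n → ℂ) : symMat n := ⟨diagonal d, diagonal_transpose d⟩

@[simp]
theorem coe_symOne : (symOne n : Matrix (Fin n) (Fin n) ℂ) = 1 :=
  rfl

@[simp]
theorem coe_symDiagonal (d : Fin n → ℂ) :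
    (symDiagonal d : Matrix (Fin n) (Fin n) ℂ) = diagonal d :=
  rfl

def mulRightSym (n : ℕ) :
    Matrix (Fin n) (Fin n) ℂ →ₗ[ℂ] symMat n →ₗ[ℂ] Matrix (Fin n) (Fin n) ℂ :=
  (LinearMap.mul ℂ _).flip.compl₂ (symMat n).subtype

@[simp]
theorem mulRightSym_apply (W : Matrix (Fin n) (Fin n) ℂ) (X : symMat n) :
    mulRightSym n W X = X * W :=
  rfl

theorem mulRightSym_mem {W : Matrix (Fin n) (Fin n) ℂ} (hW : Wᵀ = -W) :
    mulRightSym n W ∈ slSymProlong n := by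
  refine ⟨fun X => self_eq_neg.mp ?_, fun X Y => ?_⟩
  · have hX : (X : Matrix (Fin n) (Fin n) ℂ)ᵀ = X := X.2
    calc trace ((X : Matrix (Fin n) (Fin n) ℂ) * W)
        = trace ((↑X * W)ᵀ) := (trace_transpose _).symm
      _ = -trace (↑X * W) := by rw [transpose_mul, hW, hX, neg_mul, trace_neg, trace_mul_comm]
  · have hX : (X : Matrix (Fin n) (Fin n) ℂ)ᵀ = X := X.2
    have hY : (Y : Matrix (Fin n) (Fin n) ℂ)ᵀ = Y := Y.2
    simp only [mulRightSym_apply, transpose_mul, hW, hX, hY]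
    noncomm_ring

variable {φ : symMat n →ₗ[ℂ] Matrix (Fin n) (Fin n) ℂ}

theorem transpose_apply_one (hφ : φ ∈ slSymProlong n) : (φ (symOne n))ᵀ = -φ (symOne n) := by
  have h := hφ.2 (symOne n) (symOne n)
  simp only [coe_symOne, mul_one, one_mul] at h
  exact eq_neg_of_add_eq_zero_right (self_eq_neg.mp h)

theorem eq_zero_of_apply_one_eq_zero (hφ : φ ∈ slSymProlong n) (h1 : φ (symOne n) = 0) :
    φ = 0 := by
  have hskew (X : symMat n) : (φ X)ᵀ = -φ X := by
    have h := hφ.2 X (symOne n)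
    rw [h1] at h
    simp only [coe_symOne, mul_one, one_mul, zero_mul, mul_zero, transpose_zero, add_zero,
      neg_zero] at h
    exact eq_neg_of_add_eq_zero_right h
  have hbracket (X Y : symMat n) :
      φ X * Y - Y * φ X = -(φ Y * X - X * φ Y) := by
    simpa [hskew, sub_eq_add_neg] using hφ.2 X Y
  set Λ := symDiagonal (fun i : Fin n => (i : ℂ))
  have hinj : Function.Injective (fun i : Fin n => (i : ℂ)) :=
    Nat.cast_injective.comp Fin.val_injective
  have hΛ : φ Λ = 0 :=
    eq_zero_of_transpose_eq_neg_of_commute_diagonal (hskew Λ) hinj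
      (sub_eq_zero.mp (self_eq_neg.mp (hbracket Λ Λ)))
  ext X : 1
  refine eq_zero_of_transpose_eq_neg_of_commute_diagonal (hskew X) hinj (sub_eq_zero.mp ?_)
  simpa [Λ, hΛ] using hbracket X Λ

theorem eq_mulRightSym_apply_one (hφ : φ ∈ slSymProlong n) :
    φ = mulRightSym n (φ (symOne n)) :=
  sub_eq_zero.mp <| eq_zero_of_apply_one_eq_zero
    (sub_mem hφ (mulRightSym_mem (transpose_apply_one hφ))) (by simp)

def equivSkewAdjoint (n : ℕ) :
    slSymProlong n ≃ₗ[ℂ] skewAdjointMatricesSubmodule (1 : Matrix (Fin n) (Fin n) ℂ) where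
  toFun φ := ⟨φ.1 (symOne n), mem_skewAdjointMatricesSubmodule_one.mpr (transpose_apply_one φ.2)⟩
  map_add' _ _ := rfl
  map_smul' _ _ := rfl
  invFun W := ⟨mulRightSym n W, mulRightSym_mem (mem_skewAdjointMatricesSubmodule_one.mp W.2)⟩
  left_inv φ := Subtype.ext (eq_mulRightSym_apply_one φ.2).symm
  right_inv _ := Subtype.ext (one_mul _)

end slSymProlong

end

theorem stmt12_general (n : ℕ) :
    Module.finrank ℂ (slSymProlong n) = n * (n - 1) / 2 := by
  rw [(slSymProlong.equivSkewAdjoint n).finrank_eq, finrank_skewAdjointMatricesSubmodule_one,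
    Fintype.card_fin, Nat.choose_two_right]

/-- for `n ≥ 3`, the first skew-prolongation of `sl(n,ℂ)` acting on
`⊙²ℂⁿ` has complex dimension `n(n−1)/2` (i.e. it is isomorphic to `Λ²(ℂⁿ)*`). -/
theorem stmt12 (n : ℕ) (hn : 3 ≤ n) :
    Module.finrank ℂ (slSymProlong n) = n * (n - 1) / 2 :=
  stmt12_general n
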